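/- arXiv:0804.3586 — 3 statements merged into one kernel-verified Lean document; each statement's English description precedes it below -/
import Mathlib

section
/- Let x ∈ ℝ and suppose that for every M ≥ M₀ there exist integers k(M) and ℓ(M) with 1 ≤ ℓ(M) ≤ M and |x − k(M)/ℓ(M)| ≤ 2M^{−4}. Then for all sufficiently large M₁, the rationals k(M₁)/ℓ(M₁) and k(M₁²)/ℓ(M₁²) are equal; consequently x is rational, equal to k(M₁)/ℓ(M₁). -/
/-!
Two distinct fractions with denominators at most `M` and `M²` are at least `M⁻³` apart, while
the approximations at `M ≤ N ≤ M²` both lie within `2M⁻⁴ + 2N⁻⁴ < M⁻³` of `x` once `M ≥ 5`.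
So the approximating fraction at `N` agrees with the one at `M` on every window `[M, M²]`;
since `N + 1 ≤ N²`, it is constant for all large `N`, and `x`, being within `2N⁻⁴` of this
constant for every large `N`, equals it.
-/

open Filter Topology

def ApproximatesAt (x : ℝ) (k : ℕ → ℤ) (ℓ : ℕ → ℕ) (M : ℕ) : Prop :=
  1 ≤ ℓ M ∧ ℓ M ≤ M ∧ |x - (k M : ℝ) / (ℓ M : ℝ)| ≤ 2 / (M : ℝ) ^ 4

theorem one_div_mul_le_abs_div_sub_div {k₁ k₂ : ℤ} {ℓ₁ ℓ₂ : ℕ} (h₁ : 0 < ℓ₁) (h₂ : 0 < ℓ₂)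
    (hne : (k₁ : ℝ) / ℓ₁ ≠ k₂ / ℓ₂) : 1 / ((ℓ₁ : ℝ) * ℓ₂) ≤ |(k₁ : ℝ) / ℓ₁ - k₂ / ℓ₂| := by
  have hℓ₁ : (ℓ₁ : ℝ) ≠ 0 := by positivity
  have hℓ₂ : (ℓ₂ : ℝ) ≠ 0 := by positivity
  have hnum : k₁ * ℓ₂ - k₂ * ℓ₁ ≠ 0 := by
    contrapose! hne
    rw [div_eq_div_iff hℓ₁ hℓ₂]
    exact_mod_cast sub_eq_zero.mp hne
  have hone : (1 : ℝ) ≤ |((k₁ * ℓ₂ - k₂ * ℓ₁ : ℤ) : ℝ)| := by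
    exact_mod_cast Int.one_le_abs hnum
  calc 1 / ((ℓ₁ : ℝ) * ℓ₂) ≤ |((k₁ * ℓ₂ - k₂ * ℓ₁ : ℤ) : ℝ)| / (ℓ₁ * ℓ₂) := by gcongr
    _ = |(k₁ : ℝ) / ℓ₁ - k₂ / ℓ₂| := by
      rw [div_sub_div _ _ hℓ₁ hℓ₂, abs_div, abs_of_pos (by positivity : (0 : ℝ) < ℓ₁ * ℓ₂)]
      push_cast
      ring_nf

theorem div_eq_div_of_abs_sub_le {x ε₁ ε₂ : ℝ} {k₁ k₂ : ℤ} {ℓ₁ ℓ₂ : ℕ}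
    (h₁ : 0 < ℓ₁) (h₂ : 0 < ℓ₂) (hx₁ : |x - k₁ / ℓ₁| ≤ ε₁) (hx₂ : |x - k₂ / ℓ₂| ≤ ε₂)
    (hε : ε₁ + ε₂ < 1 / ((ℓ₁ : ℝ) * ℓ₂)) : (k₁ : ℝ) / ℓ₁ = k₂ / ℓ₂ := by
  by_contra hne
  have hgap := one_div_mul_le_abs_div_sub_div h₁ h₂ hne
  have hdist : |(k₁ : ℝ) / ℓ₁ - k₂ / ℓ₂| ≤ ε₁ + ε₂ :=
    (abs_sub_le _ x _).trans (by rw [abs_sub_comm]; exact add_le_add hx₁ hx₂)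
  linarith

theorem two_div_pow_four_add_lt {M N : ℝ} (hM : 5 ≤ M) (hMN : M ≤ N) :
    2 / M ^ 4 + 2 / N ^ 4 < 1 / M ^ 3 := by
  have hM0 : 0 < M := by linarith
  calc 2 / M ^ 4 + 2 / N ^ 4 ≤ 2 / M ^ 4 + 2 / M ^ 4 := by gcongr
    _ = 4 / M * (1 / M ^ 3) := by field_simp; ring
    _ < 1 * (1 / M ^ 3) := by
      gcongr
      rw [div_lt_one hM0]
      linarith
    _ = 1 / M ^ 3 := one_mul _

section

variable {x : ℝ} {M₀ : ℕ} {k : ℕ → ℤ} {ℓ : ℕ → ℕ}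

theorem div_eq_div_of_approximatesAt {M N : ℕ} (hM : ApproximatesAt x k ℓ M)
    (hN : ApproximatesAt x k ℓ N) (h5 : 5 ≤ M) (hMN : M ≤ N) (hNM : N ≤ M ^ 2) :
    (k N : ℝ) / ℓ N = k M / ℓ M := by
  obtain ⟨hℓM, hℓMM, hxM⟩ := hM
  obtain ⟨hℓN, hℓNN, hxN⟩ := hN
  refine div_eq_div_of_abs_sub_le hℓN hℓM hxN hxM ?_
  have hden : (ℓ N : ℝ) * ℓ M ≤ (M : ℝ) ^ 3 := by
    have hℓN_le : (ℓ N : ℝ) ≤ (M : ℝ) ^ 2 := by exact_mod_cast hℓNN.trans hNM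
    calc (ℓ N : ℝ) * ℓ M ≤ (M : ℝ) ^ 2 * M := by gcongr
      _ = (M : ℝ) ^ 3 := by ring
  calc 2 / (N : ℝ) ^ 4 + 2 / (M : ℝ) ^ 4 < 1 / (M : ℝ) ^ 3 := by
        rw [add_comm]; exact two_div_pow_four_add_lt (by exact_mod_cast h5) (by exact_mod_cast hMN)
    _ ≤ 1 / ((ℓ N : ℝ) * ℓ M) := by gcongr

theorem div_eq_div_of_forall_approximatesAt (h : ∀ M, M₀ ≤ M → ApproximatesAt x k ℓ M) {N : ℕ}
    (hN : max M₀ 5 ≤ N) : (k N : ℝ) / ℓ N = k (max M₀ 5) / ℓ (max M₀ 5) := by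
  induction N, hN using Nat.le_induction with
  | base => rfl
  | succ N hN ih =>
    have h5 : 5 ≤ N := le_of_max_le_right hN
    rw [← ih]
    exact div_eq_div_of_approximatesAt (h N (le_of_max_le_left hN)) (h (N + 1) (by omega)) h5
      (by omega) (by nlinarith)

theorem eq_div_of_forall_approximatesAt (h : ∀ M, M₀ ≤ M → ApproximatesAt x k ℓ M) :
    x = k (max M₀ 5) / ℓ (max M₀ 5) := by
  have hlim : Tendsto (fun N : ℕ => 2 / (N : ℝ) ^ 4) atTop (𝓝 0) :=
    tendsto_const_nhds.div_atTop
      ((tendsto_pow_atTop (by norm_num)).comp tendsto_natCast_atTop_atTop)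
  have hbound : ∀ᶠ N : ℕ in atTop, |x - k (max M₀ 5) / ℓ (max M₀ 5)| ≤ 2 / (N : ℝ) ^ 4 := by
    filter_upwards [eventually_ge_atTop (max M₀ 5)] with N hN
    rw [← div_eq_div_of_forall_approximatesAt h hN]
    exact (h N (le_of_max_le_left hN)).2.2
  exact sub_eq_zero.mp (abs_nonpos_iff.mp (ge_of_tendsto hlim hbound))

end

theorem stmt5 (x : ℝ) (M₀ : ℕ) (k : ℕ → ℤ) (ℓ : ℕ → ℕ)
    (h : ∀ M : ℕ, M₀ ≤ M → 1 ≤ ℓ M ∧ ℓ M ≤ M ∧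
      |x - (k M : ℝ) / (ℓ M : ℝ)| ≤ 2 / (M : ℝ) ^ 4) :
    ∃ M' : ℕ, ∀ M₁ : ℕ, M' ≤ M₁ →
      (k M₁ : ℝ) / (ℓ M₁ : ℝ) = (k (M₁ ^ 2) : ℝ) / (ℓ (M₁ ^ 2) : ℝ) ∧
      x = (k M₁ : ℝ) / (ℓ M₁ : ℝ) := by
  refine ⟨max M₀ 5, fun M₁ hM₁ => ?_⟩
  have hsq : max M₀ 5 ≤ M₁ ^ 2 := hM₁.trans (Nat.le_self_pow two_ne_zero M₁)
  rw [div_eq_div_of_forall_approximatesAt h hM₁, div_eq_div_of_forall_approximatesAt h hsq]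
  exact ⟨rfl, eq_div_of_forall_approximatesAt h⟩
end

section
/- For every irrational α ∈ ℝ there exists a multiplicative semigroup Σ ⊆ ℕ with lower density liminf_{N→∞} #(Σ ∩ [1,N])/N ≥ 1/200 such that the sequence (σα mod 1)_{σ ∈ Σ} (enumerated in increasing order of σ) is not equidistributed in 𝕋 = ℝ/ℤ. -/
/-!
Following Nazarov, take `S` to be the positive multiples of `4` together with those `n ≡ 2 (mod 4)` for which
`cos (2π n α) ≥ 0`. All elements of `S` are even, so a product of two of them is a multiple of `4`:
`S` is a multiplicative semigroup, and it has lower density at least `1/4`.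

Put `θ = 4α`. On the multiples of `4` the real part of the Weyl sum for `m = 1` is a sum
`∑ cos (2π (a + kθ))`, which stays bounded because `θ ∉ ℤ` (a geometric sum). On the residue class
`2` it is `∑ max (cos (2π (2α + kθ))) 0 ≥ ∑ (c + c²) / 2` with `c² = (1 + cos (2 ·)) / 2`, which is
`K/4 - O(1)` because `2θ ∉ ℤ`. As `S ∩ [0, 4K]` has at most `2K` elements, the real part of the
Weyl average stays above `1/8 - O(1/K)`.
-/

open Filter Real Finset Topology

theorem Nat.sum_range_count_nth (p : ℕ → Prop) [DecidablePred p] {M : Type*} [AddCommMonoid M]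
    (f : ℕ → M) (N : ℕ) :
    ∑ j ∈ range (Nat.count p N), f (Nat.nth p j) = ∑ n ∈ range N, if p n then f n else 0 := by
  induction N with
  | zero => simp
  | succ N ih =>
    rw [Nat.count_succ, sum_range_succ, ← ih]
    split_ifs with hN
    · rw [sum_range_succ, Nat.nth_count hN]
    · rw [add_zero, add_zero]

theorem Finset.sum_range_mul_eq_sum_sum {M : Type*} [AddCommMonoid M] (g : ℕ → M) (d K : ℕ) :
    ∑ n ∈ range (d * K), g n = ∑ k ∈ range K, ∑ r ∈ range d, g (d * k + r) := by
  induction K with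
  | zero => simp
  | succ K ih => rw [Nat.mul_succ, sum_range_add, ih, sum_range_succ]

theorem norm_geom_sum_le_of_norm_eq_one {𝕜 : Type*} [NormedDivisionRing 𝕜] {w : 𝕜}
    (hw : ‖w‖ = 1) (hw1 : w ≠ 1) (K : ℕ) : ‖∑ k ∈ range K, w ^ k‖ ≤ 2 / ‖w - 1‖ := by
  rw [geom_sum_eq hw1, norm_div]
  gcongr
  calc ‖w ^ K - 1‖ ≤ ‖w ^ K‖ + ‖(1 : 𝕜)‖ := norm_sub_le _ _
    _ = 2 := by rw [norm_pow, hw, one_pow, norm_one]; norm_num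

theorem exists_abs_sum_cos_le (a θ : ℝ) (hθ : ∀ m : ℤ, θ ≠ m) :
    ∃ C, ∀ K : ℕ, |∑ k ∈ range K, cos (2 * π * (a + k * θ))| ≤ C := by
  set w := Complex.exp (2 * π * θ * Complex.I)
  have hw : ‖w‖ = 1 := by simpa using Complex.norm_exp_ofReal_mul_I (2 * π * θ)
  have hw1 : w ≠ 1 := by
    intro h
    obtain ⟨m, hm⟩ := Complex.exp_eq_one_iff.1 h
    apply hθ m
    have him : 2 * π * θ = 2 * π * m := by simpa [mul_comm] using congrArg Complex.im hm
    exact mul_left_cancel₀ (by positivity) him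
  refine ⟨2 / ‖w - 1‖, fun K => ?_⟩
  have hsum : ∑ k ∈ range K, cos (2 * π * (a + k * θ))
      = (Complex.exp (2 * π * a * Complex.I) * ∑ k ∈ range K, w ^ k).re := by
    rw [mul_sum, Complex.re_sum]
    refine sum_congr rfl fun k _ => ?_
    rw [← Complex.exp_nat_mul, ← Complex.exp_add, ← Complex.exp_ofReal_mul_I_re]
    congr 2
    push_cast
    ring
  calc _ ≤ ‖Complex.exp (2 * π * a * Complex.I) * ∑ k ∈ range K, w ^ k‖ :=
        hsum ▸ Complex.abs_re_le_norm _
    _ ≤ 2 / ‖w - 1‖ := by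
        have ha : ‖Complex.exp (2 * π * a * Complex.I)‖ = 1 := by
          simpa using Complex.norm_exp_ofReal_mul_I (2 * π * a)
        rw [norm_mul, ha, one_mul]
        exact norm_geom_sum_le_of_norm_eq_one hw hw1 K

theorem add_sq_le_two_mul_max_zero {x : ℝ} (hx : |x| ≤ 1) : x + x ^ 2 ≤ 2 * max x 0 := by
  rcases abs_le.1 hx with ⟨h₁, h₂⟩
  rcases le_total 0 x with h | h
  · rw [max_eq_left h]; nlinarith
  · rw [max_eq_right h]; nlinarith

theorem exists_sum_max_cos_zero_ge (a θ : ℝ) (hθ : ∀ m : ℤ, 2 * θ ≠ m) :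
    ∃ C, ∀ K : ℕ, K / 4 - C ≤ ∑ k ∈ range K, max (cos (2 * π * (a + k * θ))) 0 := by
  have hθ' : ∀ m : ℤ, θ ≠ m := fun m h => hθ (2 * m) (by rw [h]; push_cast; ring)
  obtain ⟨C₁, hC₁⟩ := exists_abs_sum_cos_le a θ hθ'
  obtain ⟨C₂, hC₂⟩ := exists_abs_sum_cos_le (2 * a) (2 * θ) hθ
  refine ⟨C₁ / 2 + C₂ / 4, fun K => ?_⟩
  -- `max c 0 ≥ (c + c²) / 2` and `c² = (1 + cos (2 ·)) / 2`
  have hterm : ∀ k : ℕ, 1 / 4 + cos (2 * π * (a + k * θ)) / 2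
      + cos (2 * π * (2 * a + k * (2 * θ))) / 4 ≤ max (cos (2 * π * (a + k * θ))) 0 := by
    intro k
    have hsq := cos_sq (2 * π * (a + k * θ))
    have hle := add_sq_le_two_mul_max_zero (abs_cos_le_one (2 * π * (a + k * θ)))
    rw [show 2 * (2 * π * (a + k * θ)) = 2 * π * (2 * a + k * (2 * θ)) by ring] at hsq
    linarith
  have hsum := sum_le_sum fun k (_ : k ∈ range K) => hterm k
  rw [sum_add_distrib, sum_add_distrib, sum_const, card_range, ← sum_div, ← sum_div,
    nsmul_eq_mul] at hsum
  linarith [(abs_le.1 (hC₁ K)).1, (abs_le.1 (hC₂ K)).1]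

theorem div_le_ncard_inter_Icc {S : Set ℕ} {d : ℕ} (hS : ∀ n, d ∣ n → n ≠ 0 → n ∈ S) (N : ℕ) :
    N / d ≤ (S ∩ Set.Icc 1 N).ncard := by
  classical
  rw [← Nat.Ioc_filter_dvd_card_eq_div, ← Set.ncard_coe_finset]
  refine Set.ncard_le_ncard (fun n hn => ?_) ((Set.finite_Icc 1 N).subset Set.inter_subset_right)
  simp only [coe_filter, mem_Ioc, Set.mem_ofPred_eq] at hn
  exact ⟨hS n hn.2 (by omega), by simp only [Set.mem_Icc]; omega⟩

theorem one_div_le_liminf_ncard_inter_Icc_div {S : Set ℕ} {d : ℕ} (hd : 0 < d)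
    (hS : ∀ n, d ∣ n → n ≠ 0 → n ∈ S) :
    (1 / d : ℝ) ≤ atTop.liminf (fun N : ℕ => ((S ∩ Set.Icc 1 N).ncard : ℝ) / N) := by
  have hlim : Tendsto (fun N : ℕ => (1 / d : ℝ) - 1 / N) atTop (𝓝 (1 / d)) := by
    simpa using (tendsto_one_div_atTop_nhds_zero_nat (𝕜 := ℝ)).const_sub (1 / d : ℝ)
  rw [← hlim.liminf_eq]
  refine liminf_le_liminf ?_ hlim.isBoundedUnder_ge ?_
  · filter_upwards [eventually_gt_atTop 0] with N hN
    have hfloor : (N / d : ℝ) - 1 < (N / d : ℕ) := by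
      rw [← Nat.floor_div_eq_div (K := ℝ)]
      exact Nat.sub_one_lt_floor _
    have hcard : ((N / d : ℕ) : ℝ) ≤ (S ∩ Set.Icc 1 N).ncard := by
      exact_mod_cast div_le_ncard_inter_Icc hS N
    rw [le_div_iff₀ (by positivity)]
    calc (1 / d - 1 / N : ℝ) * N = N / d - 1 := by field_simp
      _ ≤ _ := by linarith
  · refine isCoboundedUnder_ge_of_eventually_le atTop (x := 1) (Eventually.of_forall fun N => ?_)
    refine div_le_one_of_le₀ ?_ N.cast_nonneg
    calc ((S ∩ Set.Icc 1 N).ncard : ℝ) ≤ (Set.Icc 1 N).ncard := by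
          exact_mod_cast Set.ncard_le_ncard Set.inter_subset_right (Set.finite_Icc 1 N)
      _ = N := by simp [Set.ncard_eq_toFinset_card']

theorem not_tendsto_sum_nth_div_of_re_ge {p : ℕ → Prop} [DecidablePred p] {f : ℕ → ℂ} {c : ℝ}
    (hc : 0 < c)
    (h : ∀ B, ∃ N, B < Nat.count p N ∧
      c * Nat.count p N ≤ (∑ n ∈ range N, if p n then f n else 0).re) :
    ¬ Tendsto (fun n : ℕ => (∑ j ∈ range n, f (Nat.nth p j)) / n) atTop (𝓝 0) := by
  intro hlim
  obtain ⟨B, hB⟩ := eventually_atTop.1 ((tendsto_norm_zero.comp hlim).eventually (gt_mem_nhds hc))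
  obtain ⟨N, hN, hre⟩ := h B
  have hpos : (0 : ℝ) < Nat.count p N := by exact_mod_cast B.zero_le.trans_lt hN
  have hsmall := hB _ hN.le
  rw [Function.comp_apply, Nat.sum_range_count_nth] at hsmall
  have hre' : c ≤ ((∑ n ∈ range N, if p n then f n else 0) / (Nat.count p N : ℂ)).re := by
    rw [Complex.div_natCast_re, le_div_iff₀ hpos]
    exact hre
  exact (hre'.trans (Complex.re_le_norm _)).not_gt hsmall

def nazarovSet (α : ℝ) : Set ℕ :=
  {n | (4 ∣ n ∧ n ≠ 0) ∨ (n % 4 = 2 ∧ 0 ≤ cos (2 * π * n * α))}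

namespace nazarovSet

variable {α : ℝ}

theorem mul_mem {a b : ℕ} (ha : a ∈ nazarovSet α) (hb : b ∈ nazarovSet α) :
    a * b ∈ nazarovSet α := by
  have heven : ∀ n ∈ nazarovSet α, 2 ∣ n ∧ n ≠ 0 := by
    rintro n (⟨h4, h0⟩ | ⟨h2, -⟩) <;> omega
  obtain ⟨⟨s, rfl⟩, ha0⟩ := heven a ha
  obtain ⟨⟨t, rfl⟩, hb0⟩ := heven b hb
  exact Or.inl ⟨⟨s * t, by ring⟩, by positivity⟩

open Classical in
theorem sum_range_indicator {M : Type*} [AddCommMonoid M] (h : ℕ → M) (K : ℕ) :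
    ∑ n ∈ range (4 * K + 1), (nazarovSet α).indicator h n =
      ∑ k ∈ range K,
        ((if 0 ≤ cos (2 * π * ((4 * k + 2 : ℕ) : ℝ) * α) then h (4 * k + 2) else 0)
          + h (4 * k + 4)) := by
  rw [sum_range_succ', sum_range_mul_eq_sum_sum,
    Set.indicator_of_notMem (by simp [nazarovSet]), add_zero]
  refine sum_congr rfl fun k _ => ?_
  have h₁ : 4 * k + 1 ∉ nazarovSet α := by rintro (h | ⟨h, -⟩) <;> omega
  have h₂ : 4 * k + 2 ∈ nazarovSet α ↔ 0 ≤ cos (2 * π * ((4 * k + 2 : ℕ) : ℝ) * α) := by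
    simp only [nazarovSet, Set.mem_ofPred_eq]
    constructor
    · rintro (h | ⟨-, h⟩)
      · omega
      · exact h
    · exact fun h => Or.inr ⟨by omega, h⟩
  have h₃ : 4 * k + 3 ∉ nazarovSet α := by rintro (h | ⟨h, -⟩) <;> omega
  have h₄ : 4 * k + 4 ∈ nazarovSet α := Or.inl ⟨⟨k + 1, by ring⟩, by omega⟩
  simp only [sum_range_succ, range_zero, sum_empty, zero_add, add_assoc, Nat.reduceAdd]
  rw [Set.indicator_of_notMem h₁, Set.indicator_of_notMem h₃, Set.indicator_of_mem h₄,
    Set.indicator_apply, if_congr h₂ rfl rfl]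
  abel

theorem exists_sum_range_indicator_cos_ge (hα : ∀ m : ℤ, 8 * α ≠ m) :
    ∃ C, ∀ K : ℕ, K / 4 - C ≤
      ∑ n ∈ range (4 * K + 1), (nazarovSet α).indicator (fun n => cos (2 * π * n * α)) n := by
  have h4α : ∀ m : ℤ, 4 * α ≠ m := fun m h => hα (2 * m) (by push_cast; linarith)
  obtain ⟨C₁, hC₁⟩ := exists_abs_sum_cos_le (4 * α) (4 * α) h4α
  obtain ⟨C₂, hC₂⟩ := exists_sum_max_cos_zero_ge (2 * α) (4 * α)
    fun m h => hα m (by linarith)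
  refine ⟨C₁ + C₂, fun K => ?_⟩
  have hsum : ∑ n ∈ range (4 * K + 1), (nazarovSet α).indicator (fun n => cos (2 * π * n * α)) n
      = ∑ k ∈ range K, max (cos (2 * π * (2 * α + k * (4 * α)))) 0
        + ∑ k ∈ range K, cos (2 * π * (4 * α + k * (4 * α))) := by
    rw [sum_range_indicator, ← sum_add_distrib]
    refine sum_congr rfl fun k _ => ?_
    have h₂ : 2 * π * ((4 * k + 2 : ℕ) : ℝ) * α = 2 * π * (2 * α + k * (4 * α)) := by
      push_cast; ring
    have h₄ : 2 * π * ((4 * k + 4 : ℕ) : ℝ) * α = 2 * π * (4 * α + k * (4 * α)) := by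
      push_cast; ring
    rw [h₂, h₄, max_def']
  linarith [hsum, hC₂ K, (abs_le.1 (hC₁ K)).1]

open Classical in
theorem count_mem_bounds (K : ℕ) :
    K ≤ Nat.count (· ∈ nazarovSet α) (4 * K + 1) ∧
      Nat.count (· ∈ nazarovSet α) (4 * K + 1) ≤ 2 * K := by
  have hcount : Nat.count (· ∈ nazarovSet α) (4 * K + 1) =
      ∑ k ∈ range K,
        ((if 0 ≤ cos (2 * π * ((4 * k + 2 : ℕ) : ℝ) * α) then 1 else 0) + 1) := by
    rw [← sum_range_indicator (fun _ => 1), Nat.count_eq_card_filter_range, card_filter]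
    simp only [Set.indicator_apply]
  rw [hcount]
  constructor
  · simpa using sum_le_sum fun k (_ : k ∈ range K) => Nat.le_add_left 1 _
  · calc _ ≤ ∑ _k ∈ range K, 2 := sum_le_sum fun k _ => by split_ifs <;> omega
      _ = 2 * K := by simp [mul_comm]

theorem not_tendsto_weyl_sum (hα : ∀ m : ℤ, 8 * α ≠ m) :
    ¬ Tendsto (fun n : ℕ => (∑ j ∈ range n, Complex.exp (2 * π * Complex.I *
        ((Nat.nth (· ∈ nazarovSet α) j : ℕ) : ℂ) * α)) / n) atTop (𝓝 0) := by
  classical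
  refine not_tendsto_sum_nth_div_of_re_ge (p := (· ∈ nazarovSet α))
    (f := fun n => Complex.exp (2 * π * Complex.I * n * α)) (c := 1 / 16) (by norm_num) fun B => ?_
  obtain ⟨C, hC⟩ := exists_sum_range_indicator_cos_ge hα
  set K := max (B + 1) ⌈8 * C⌉₊
  obtain ⟨hK₁, hK₂⟩ := count_mem_bounds (α := α) K
  have hre : (∑ n ∈ range (4 * K + 1),
      if n ∈ nazarovSet α then Complex.exp (2 * π * Complex.I * n * α) else 0).re =
      ∑ n ∈ range (4 * K + 1), (nazarovSet α).indicator (fun n => cos (2 * π * n * α)) n := by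
    rw [Complex.re_sum]
    refine sum_congr rfl fun n _ => ?_
    rw [Set.indicator_apply, apply_ite Complex.re, Complex.zero_re,
      show 2 * π * Complex.I * n * α = (2 * π * n * α : ℝ) * Complex.I by push_cast; ring,
      Complex.exp_ofReal_mul_I_re]
  refine ⟨4 * K + 1, by omega, ?_⟩
  have hKC : 8 * C ≤ K := (Nat.le_ceil _).trans (by exact_mod_cast le_max_right _ _)
  have hcount : (Nat.count (· ∈ nazarovSet α) (4 * K + 1) : ℝ) ≤ 2 * K := by exact_mod_cast hK₂
  rw [hre]
  linarith [hC K]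

end nazarovSet

theorem stmt14 (α : ℝ) (hα : Irrational α) :
    ∃ S : Set ℕ, (∀ a ∈ S, ∀ b ∈ S, a * b ∈ S) ∧
      (1 / 200 : ℝ) ≤
        atTop.liminf (fun N : ℕ => ((S ∩ Set.Icc 1 N).ncard : ℝ) / (N : ℝ)) ∧
      -- the sequence `(σ_j α mod 1)`, with `σ_j` the increasing enumeration of `S`,
      -- is not equidistributed in `ℝ/ℤ`: it fails the Weyl criterion
      ¬ (∀ m : ℤ, m ≠ 0 →
        Tendsto (fun n : ℕ =>
            (∑ j ∈ Finset.range n,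
              Complex.exp (2 * Real.pi * Complex.I * (m : ℂ) *
                ((Nat.nth (· ∈ S) j : ℕ) : ℂ) * (α : ℂ))) / (n : ℂ))
          atTop (nhds 0)) := by
  have h8α : ∀ m : ℤ, 8 * α ≠ m := by
    simpa using (hα.natCast_mul (m := 8) (by norm_num)).ne_int
  refine ⟨nazarovSet α, fun a ha b hb => nazarovSet.mul_mem ha hb, ?_, fun hweyl => ?_⟩
  · have hdens := one_div_le_liminf_ncard_inter_Icc_div (S := nazarovSet α) (d := 4) (by norm_num)
      fun n hn hn0 => Or.inl ⟨hn, hn0⟩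
    exact le_trans (by norm_num) hdens
  · exact nazarovSet.not_tendsto_weyl_sum h8α (by simpa using hweyl 1 one_ne_zero)
end

section
/- Let Σ ⊆ ℕ be a multiplicative semigroup with liminf_{N→∞} #(Σ ∩ [1,N])/N > 0, and let μ be an ergodic Σ-invariant Borel probability measure on 𝕋 = ℝ/ℤ with no atoms. Then for every m ∈ ℤ \ {0}, the Fourier coefficient μ̂(m) = ∫ e^{−2πimx} dμ(x) satisfies: the averages (1/#(Σ∩[1,N])) ∑_{n∈Σ∩[1,N]} |μ̂(mn)|² do not converge to a positive limit along every subsequence; in particular, if additionally liminf over Σ of |μ̂(mn)|² were positive for all m, Wiener's lemma would force μ to have an atom, a contradiction. Consequently, by Wiener's lemma, positive lower density of Σ together with atomlessness and invariance forces μ to be Lebesgue measure. -/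
/-!
Write `e(x) = exp(2πix)` and `μ̂(k) = ∫ e(-kx) dμ(x)`. By Fubini `|μ̂(k)|² = ∬ e(k(x - y)) dμ dμ`;
the averages `(1/N) ∑_{k<N} e(kz)` are bounded by `1` and tend to `0` for `z ≠ 0`, and the diagonal
is `μ × μ`-null for atomless `μ`, so dominated convergence gives Wiener's lemma
`(1/N) ∑_{k<N} |μ̂(k)|² → 0`. Invariance under `x ↦ nx` gives `μ̂(mn) = μ̂(m)` for `n ∈ Σ`; for
`m ≥ 1` the positive-density set of multiples `mn ≤ mN` then forces
`|μ̂(m)|² ≲ (1/mN) ∑_{k ≤ mN} |μ̂(k)|² → 0`. So every nonzero Fourier coefficient vanishes, as for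
Haar measure, and Fourier coefficients determine a finite measure on the circle.
-/

open MeasureTheory Filter Topology AddCircle ComplexConjugate Finset

lemma ncard_inter_Icc_mul_le_sum_range {c : ℕ → ℝ} (hc : ∀ k, 0 ≤ c k) {S : Set ℕ} {m : ℕ}
    (hm : m ≠ 0) (hcS : ∀ n ∈ S, c (m * n) = c m) (N : ℕ) :
    (S ∩ Set.Icc 1 N).ncard * c m ≤ ∑ k ∈ range (m * N + 1), c k := by
  have hfin : (S ∩ Set.Icc 1 N).Finite := (Set.finite_Icc 1 N).inter_of_right S
  rw [Set.ncard_eq_toFinset_card _ hfin, ← nsmul_eq_mul, ← sum_const]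
  calc ∑ _ ∈ hfin.toFinset, c m = ∑ n ∈ hfin.toFinset, c (m * n) :=
        sum_congr rfl fun n hn => (hcS n ((Set.Finite.mem_toFinset _).1 hn).1).symm
    _ = ∑ k ∈ hfin.toFinset.image (m * ·), c k :=
        (sum_image fun _ _ _ _ h => Nat.eq_of_mul_eq_mul_left (Nat.pos_of_ne_zero hm) h).symm
    _ ≤ ∑ k ∈ range (m * N + 1), c k := by
        refine sum_le_sum_of_subset_of_nonneg (fun k hk => ?_) fun k _ _ => hc k
        obtain ⟨n, hn, rfl⟩ := mem_image.1 hk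
        have hnN := ((Set.Finite.mem_toFinset _).1 hn).2.2
        exact mem_range.2 (Nat.lt_succ_of_le (Nat.mul_le_mul_left m hnN))

theorem eq_zero_of_tendsto_avg_of_mul_eq {c : ℕ → ℝ} (hc : ∀ k, 0 ≤ c k)
    (hlim : Tendsto (fun N : ℕ => (∑ k ∈ range N, c k) / N) atTop (𝓝 0)) {S : Set ℕ}
    (hdens : 0 < atTop.liminf (fun N : ℕ => ((S ∩ Set.Icc 1 N).ncard : ℝ) / N)) {m : ℕ}
    (hm : m ≠ 0) (hcS : ∀ n ∈ S, c (m * n) = c m) : c m = 0 := by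
  set d := atTop.liminf (fun N : ℕ => ((S ∩ Set.Icc 1 N).ncard : ℝ) / N)
  have hdense : ∀ᶠ N : ℕ in atTop, d / 2 < (S ∩ Set.Icc 1 N).ncard / N :=
    eventually_lt_of_lt_liminf (half_lt_self hdens) (isBoundedUnder_of ⟨0, fun N => by positivity⟩)
  have hM : Tendsto (fun N => m * N + 1) atTop atTop :=
    tendsto_atTop_mono (fun N => (Nat.le_mul_of_pos_left N (Nat.pos_of_ne_zero hm)).trans
      (Nat.le_succ _)) tendsto_id
  have hsub : Tendsto (fun N => (m + 1 : ℝ) * ((∑ k ∈ range (m * N + 1), c k) / (m * N + 1 : ℕ)))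
      atTop (𝓝 0) := by
    simpa using (hlim.comp hM).const_mul ((m : ℝ) + 1)
  have key : d / 2 * c m ≤ 0 := by
    refine ge_of_tendsto hsub ?_
    filter_upwards [hdense, eventually_ge_atTop 1] with N hN hN1
    have hN1 : (1 : ℝ) ≤ N := by exact_mod_cast hN1
    have hs : 0 ≤ ∑ k ∈ range (m * N + 1), c k := sum_nonneg fun k _ => hc k
    have hMN : ((m * N + 1 : ℕ) : ℝ) ≤ (m + 1) * N := by push_cast; linarith
    calc d / 2 * c m ≤ (S ∩ Set.Icc 1 N).ncard / N * c m := by gcongr; exact hc m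
      _ ≤ (∑ k ∈ range (m * N + 1), c k) / N := by
        rw [div_mul_eq_mul_div]
        gcongr
        exact ncard_inter_Icc_mul_le_sum_range hc hm hcS N
      _ ≤ _ := by
        rw [mul_div_assoc', div_le_div_iff₀ (by positivity) (by positivity)]
        nlinarith [mul_le_mul_of_nonneg_left hMN hs]
  exact le_antisymm (nonpos_of_mul_nonpos_right key (half_pos hdens)) (hc m)

lemma MeasureTheory.Measure.prod_self_diagonal_eq_zero {α : Type*} [MeasurableSpace α]
    [MeasurableEq α] (μ : Measure α) [SFinite μ] [NullSingletonClass μ] :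
    μ.prod μ (Set.diagonal α) = 0 := by
  rw [Measure.prod_apply measurableSet_diagonal]
  have (x : α) : Prod.mk x ⁻¹' Set.diagonal α = {x} := by ext; simp [eq_comm]
  simp [this]

namespace AddCircle

variable {T : ℝ}

lemma norm_avg_fourier_le_one (z : AddCircle T) (N : ℕ) :
    ‖(∑ k ∈ range N, fourier k z) / N‖ ≤ 1 := by
  rw [norm_div, Complex.norm_natCast]
  refine div_le_one_of_le₀ ((norm_sum_le _ _).trans ?_) N.cast_nonneg
  simp [fourier_apply, Circle.norm_coe]

variable [hT : Fact (0 < T)]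

lemma norm_sum_range_fourier_le {z : AddCircle T} (hz : z ≠ 0) (N : ℕ) :
    ‖∑ k ∈ range N, fourier k z‖ ≤ 2 / ‖(toCircle z : ℂ) - 1‖ := by
  have hu : (toCircle z : ℂ) ≠ 1 := by
    rw [Ne, Circle.coe_eq_one, ← toCircle_zero, (injective_toCircle hT.out.ne').eq_iff]
    exact hz
  have hpow (k : ℕ) : fourier k z = (toCircle z : ℂ) ^ k := by
    rw [fourier_apply, natCast_zsmul, toCircle_nsmul, Circle.coe_pow]
  simp_rw [hpow, geom_sum_eq hu, norm_div]
  gcongr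
  calc ‖(toCircle z : ℂ) ^ N - 1‖ ≤ ‖(toCircle z : ℂ) ^ N‖ + ‖(1 : ℂ)‖ := norm_sub_le _ _
    _ = 2 := by norm_num [Circle.norm_coe]

lemma tendsto_avg_fourier {z : AddCircle T} (hz : z ≠ 0) :
    Tendsto (fun N : ℕ => (∑ k ∈ range N, fourier k z) / N) atTop (𝓝 0) := by
  refine squeeze_zero_norm (fun N => ?_)
    (tendsto_const_div_atTop_nhds_zero_nat (2 / ‖(toCircle z : ℂ) - 1‖))
  rw [norm_div, Complex.norm_natCast]
  gcongr
  exact norm_sum_range_fourier_le hz N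

end AddCircle

namespace MeasureTheory.Measure

variable {T : ℝ}

noncomputable def fourierCoeff (μ : Measure (AddCircle T)) (n : ℤ) : ℂ :=
  ∫ x, fourier (-n) x ∂μ

variable (μ : Measure (AddCircle T))

lemma fourierCoeff_neg (n : ℤ) : μ.fourierCoeff (-n) = conj (μ.fourierCoeff n) := by
  simp only [fourierCoeff, ← integral_conj, fourier_neg, RCLike.conj_conj, neg_neg]

lemma fourierCoeff_zero [IsProbabilityMeasure μ] : μ.fourierCoeff 0 = 1 := by
  simp [fourierCoeff]

lemma fourierCoeff_mul_of_map_zsmul {n : ℤ} (h : μ.map (n • ·) = μ) (m : ℤ) :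
    μ.fourierCoeff (m * n) = μ.fourierCoeff m := by
  calc μ.fourierCoeff (m * n) = ∫ x, fourier (-m) (n • x) ∂μ := by
        simp only [fourierCoeff, fourier_apply, smul_smul, neg_mul]
    _ = ∫ x, fourier (-m) x ∂(μ.map (n • ·)) :=
        (integral_map (continuous_zsmul n).aemeasurable
          (fourier (-m)).continuous.aestronglyMeasurable).symm
    _ = μ.fourierCoeff m := by rw [h, fourierCoeff]

lemma integral_fourier_sub_prod [IsFiniteMeasure μ] (k : ℤ) :
    ∫ p, fourier k (p.1 - p.2) ∂(μ.prod μ) = (‖μ.fourierCoeff k‖ ^ 2 : ℂ) := by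
  have hsplit (p : AddCircle T × AddCircle T) :
      fourier k (p.1 - p.2) = fourier k p.1 * fourier (-k) p.2 := by
    rw [fourier_apply, fourier_apply, fourier_apply, smul_sub, sub_eq_add_neg, ← neg_smul,
      toCircle_add, Circle.coe_mul]
  simp_rw [hsplit]
  rw [integral_prod_mul (fun x => fourier k x) (fun y => fourier (-k) y), ← Complex.conj_mul']
  congr 1
  rw [← fourierCoeff_neg, fourierCoeff, neg_neg]

variable [hT : Fact (0 < T)]

theorem tendsto_avg_norm_sq_fourierCoeff [IsFiniteMeasure μ] [NullSingletonClass μ] :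
    Tendsto (fun N : ℕ => (∑ k ∈ range N, ‖μ.fourierCoeff k‖ ^ 2) / N) atTop (𝓝 0) := by
  set F : ℕ → AddCircle T × AddCircle T → ℂ :=
    fun N p => (∑ k ∈ range N, fourier k (p.1 - p.2)) / N
  have hF (N : ℕ) :
      ∫ p, F N p ∂(μ.prod μ) = ((∑ k ∈ range N, ‖μ.fourierCoeff k‖ ^ 2) / N : ℝ) := by
    have hint (k : ℤ) : Integrable (fun p : AddCircle T × AddCircle T => fourier k (p.1 - p.2))
        (μ.prod μ) :=
      ((fourier k).continuous.comp continuous_sub).integrable_of_hasCompactSupport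
        (.of_compactSpace _)
    rw [integral_div, integral_finsetSum (range N) fun k _ => hint k]
    simp only [integral_fourier_sub_prod]
    push_cast
    rfl
  have hoff : ∀ᵐ p ∂(μ.prod μ), p.1 ≠ p.2 :=
    measure_eq_zero_iff_ae_notMem.1 (prod_self_diagonal_eq_zero μ)
  have hlim : Tendsto (fun N => ∫ p, F N p ∂(μ.prod μ)) atTop (𝓝 (∫ _, 0 ∂(μ.prod μ))) := by
    refine tendsto_integral_of_dominated_convergence (fun _ => 1)
      (fun N => Continuous.aestronglyMeasurable (by fun_prop)) (integrable_const 1)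
      (fun N => ae_of_all _ fun p => norm_avg_fourier_le_one _ N) ?_
    filter_upwards [hoff] with p hp
    exact tendsto_avg_fourier (sub_ne_zero.2 hp)
  simp_rw [integral_zero, hF] at hlim
  exact tendsto_ofReal_iff.1 hlim

lemma ext_of_fourierCoeff_eq {ν : Measure (AddCircle T)} [IsFiniteMeasure μ] [IsFiniteMeasure ν]
    (h : ∀ n, μ.fourierCoeff n = ν.fourierCoeff n) : μ = ν := by
  refine ext_of_forall_mem_subalgebra_integral_eq_of_polish
    (A := fourierSubalgebra.comap (BoundedContinuousFunction.toContinuousMapStarₐ ℂ)) ?_ ?_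
  · intro x y hxy
    obtain ⟨_, ⟨f, hf, rfl⟩, hfxy⟩ := fourierSubalgebra_separatesPoints hxy
    exact ⟨_, ⟨_, ⟨BoundedContinuousFunction.mkOfCompact f, hf, rfl⟩, rfl⟩, hfxy⟩
  · suffices ∀ f ∈ Submodule.span ℂ (Set.range (fourier (T := T))),
        ∫ x, f x ∂μ = ∫ x, f x ∂ν from
      fun g hg => this _ (by rw [← fourierSubalgebra_coe]; exact hg)
    intro f hf
    induction hf using Submodule.span_induction with
    | mem f hf =>
      obtain ⟨n, rfl⟩ := hf
      simpa [fourierCoeff] using h (-n)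
    | zero => simp
    | add f g _ _ hf hg =>
      have hint (f : C(AddCircle T, ℂ)) (ρ : Measure (AddCircle T)) [IsFiniteMeasure ρ] :
          Integrable f ρ :=
        f.continuous.integrable_of_hasCompactSupport (.of_compactSpace _)
      simp only [ContinuousMap.add_apply]
      rw [integral_add (hint f μ) (hint g μ), integral_add (hint f ν) (hint g ν), hf, hg]
    | smul c f _ hf => simp [integral_const_mul, hf]

lemma fourierCoeff_haarAddCircle {n : ℤ} (hn : n ≠ 0) :
    (haarAddCircle : Measure (AddCircle T)).fourierCoeff n = 0 :=
  integral_eq_zero_of_add_right_eq_neg (fourier_add_half_inv_index (neg_ne_zero.2 hn) hT.out)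

lemma eq_haarAddCircle_of_fourierCoeff_eq_zero [IsProbabilityMeasure μ]
    (h : ∀ n ≠ 0, μ.fourierCoeff n = 0) : μ = haarAddCircle := by
  refine μ.ext_of_fourierCoeff_eq fun n => ?_
  obtain rfl | hn := eq_or_ne n 0
  · rw [fourierCoeff_zero, fourierCoeff_zero]
  · rw [h n hn, fourierCoeff_haarAddCircle hn]

end MeasureTheory.Measure

theorem stmt15_general (S : Set ℕ)
    (hdens : 0 < atTop.liminf (fun N : ℕ => ((S ∩ Set.Icc 1 N).ncard : ℝ) / (N : ℝ)))
    (μ : Measure (AddCircle (1:ℝ))) [IsProbabilityMeasure μ]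
    (hinv : ∀ n ∈ S, ∀ A : Set (AddCircle (1:ℝ)), MeasurableSet A →
      μ ((fun x : AddCircle (1:ℝ) => n • x) ⁻¹' A) = μ A)
    (hatomless : ∀ x : AddCircle (1:ℝ), μ {x} = 0) :
    μ = volume := by
  have : NullSingletonClass μ := ⟨hatomless⟩
  have hmap (n : ℕ) (hn : n ∈ S) : μ.map ((n : ℤ) • ·) = μ := by
    ext A hA
    rw [Measure.map_apply (continuous_zsmul _).measurable hA]
    simpa only [natCast_zsmul] using hinv n hn A hA
  have hcoeff_nat (m : ℕ) (hm : m ≠ 0) : μ.fourierCoeff m = 0 := by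
    have := eq_zero_of_tendsto_avg_of_mul_eq (c := fun k : ℕ => ‖μ.fourierCoeff k‖ ^ 2)
      (fun _ => by positivity) μ.tendsto_avg_norm_sq_fourierCoeff hdens hm fun n hn => by
        simp only [Nat.cast_mul, μ.fourierCoeff_mul_of_map_zsmul (hmap n hn)]
    simpa using this
  have hcoeff (n : ℤ) (hn : n ≠ 0) : μ.fourierCoeff n = 0 := by
    obtain ⟨m, rfl | rfl⟩ := Int.eq_nat_or_neg n
    · exact hcoeff_nat m (by omega)
    · rw [Measure.fourierCoeff_neg, hcoeff_nat m (by omega), map_zero]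
  rw [volume_eq_smul_haarAddCircle, ENNReal.ofReal_one, one_smul]
  exact μ.eq_haarAddCircle_of_fourierCoeff_eq_zero hcoeff

theorem stmt15 (S : Set ℕ) (hS : ∀ a ∈ S, ∀ b ∈ S, a * b ∈ S)
    (hdens : 0 < atTop.liminf (fun N : ℕ => ((S ∩ Set.Icc 1 N).ncard : ℝ) / (N : ℝ)))
    (μ : Measure (AddCircle (1:ℝ))) [IsProbabilityMeasure μ]
    (hinv : ∀ n ∈ S, ∀ A : Set (AddCircle (1:ℝ)), MeasurableSet A →
      μ ((fun x : AddCircle (1:ℝ) => n • x) ⁻¹' A) = μ A)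
    (herg : ∀ A : Set (AddCircle (1:ℝ)), MeasurableSet A →
      (∀ n ∈ S, (fun x : AddCircle (1:ℝ) => n • x) ⁻¹' A = A) → μ A = 0 ∨ μ A = 1)
    (hatomless : ∀ x : AddCircle (1:ℝ), μ {x} = 0) :
    μ = volume :=
  stmt15_general S hdens μ hinv hatomless
end
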